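/- Let Γ be a finite nonempty set, Δ : Γ → Γ → ℤ a matrix with det Δ ≠ 0, ∂Γ ⊆ Γ and Γ° = Γ \ ∂Γ. Equip H_{ℝ/ℤ}(Γ) ⊆ (ℝ/ℤ)^Γ with the subspace topology from the product topology on (ℝ/ℤ)^Γ. Then the image of the pointwise reduction homomorphism H_ℝ(Γ) → H_{ℝ/ℤ}(Γ) is exactly the connected component of 0 in H_{ℝ/ℤ}(Γ) (i.e. the maximal connected subgroup G̃₀(Γ) of the extended sandpile group). -/
import Mathlib

open scoped BigOperators

/-- `Δ° ⊗ A : A^Γ → A^{Γ°}`: the Laplacian followed by restriction to the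
interior `Γ° = Γ \ ∂Γ` (here `B` is the boundary `∂Γ`). -/
def lapIntHom {Γ : Type} [Fintype Γ] (Δ : Matrix Γ Γ ℤ) (B : Set Γ)
    (A : Type) [AddCommGroup A] : (Γ → A) →+ ({v : Γ // v ∉ B} → A) where
  toFun f v := ∑ w, Δ v.1 w • f w
  map_zero' := by funext v; simp
  map_add' f g := by funext v; simp [smul_add, Finset.sum_add_distrib]

/-- `F : Γ → ℝ` is harmonic: `(ΔF)(v) = 0` for all interior `v`. -/
def HarmReal {Γ : Type} [Fintype Γ] (Δ : Matrix Γ Γ ℤ) (B : Set Γ) (F : Γ → ℝ) : Prop :=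
  ∀ v ∉ B, ∑ w, (Δ v w : ℝ) * F w = 0

section Aux

variable {Γ : Type} [Fintype Γ]

/-- The reduction map `ℝ → ℝ/ℤ` as an additive hom. -/
noncomputable def rmk : ℝ →+ AddCircle (1 : ℝ) := QuotientAddGroup.mk' _

lemma rmk_apply (x : ℝ) : rmk x = (x : AddCircle (1 : ℝ)) := rfl

lemma sum_zsmul_coe (Δ : Matrix Γ Γ ℤ) (F : Γ → ℝ) (v : Γ) :
    ∑ w, Δ v w • ((F w : ℝ) : AddCircle (1 : ℝ))
      = ((∑ w, (Δ v w : ℝ) * F w : ℝ) : AddCircle (1 : ℝ)) := by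
  rw [← rmk_apply, map_sum]
  refine Finset.sum_congr rfl fun w _ => ?_
  rw [← rmk_apply, ← map_zsmul rmk, zsmul_eq_mul]

lemma mem_ker_iff (Δ : Matrix Γ Γ ℤ) (B : Set Γ) (ψ : Γ → AddCircle (1 : ℝ)) :
    ψ ∈ (lapIntHom Δ B (AddCircle (1 : ℝ))).ker ↔
      ∀ v ∉ B, ∑ w, Δ v w • ψ w = 0 := by
  simp [AddMonoidHom.mem_ker, lapIntHom, funext_iff, Subtype.forall]

lemma coe_int_zero (n : ℤ) : (((n : ℝ)) : AddCircle (1 : ℝ)) = 0 := by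
  rw [AddCircle.coe_eq_zero_iff]
  exact ⟨n, by simp⟩

lemma coe_eq_zero_iff' (x : ℝ) :
    ((x : AddCircle (1 : ℝ)) = 0) ↔ ∃ n : ℤ, (n : ℝ) = x := by
  rw [AddCircle.coe_eq_zero_iff]
  simp

end Aux

/-- The image of the pointwise-reduction homomorphism `H_ℝ(Γ) → H_{ℝ/ℤ}(Γ)` is
exactly the connected component of `0` in `H_{ℝ/ℤ}(Γ) = ker(Δ° ⊗ ℝ/ℤ)` (equipped
with the subspace topology from the product topology on `(ℝ/ℤ)^Γ`), i.e. the
maximal connected subgroup `G̃₀(Γ)` of the extended sandpile group. -/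
theorem image_real_harmonic_eq_connected_component
    (Γ : Type) [Fintype Γ] [DecidableEq Γ] [Nonempty Γ]
    (Δ : Matrix Γ Γ ℤ) (B : Set Γ) (hΔ : Δ.det ≠ 0) :
    {ψ : (lapIntHom Δ B (AddCircle (1 : ℝ))).ker |
        ∃ F : Γ → ℝ, HarmReal Δ B F ∧
          (ψ : Γ → AddCircle (1 : ℝ)) = fun v => (F v : AddCircle (1 : ℝ))} =
      connectedComponent (0 : (lapIntHom Δ B (AddCircle (1 : ℝ))).ker) := by
  classical
  set K := (lapIntHom Δ B (AddCircle (1 : ℝ))).ker with hKdef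
  set S : Set K := {ψ : K |
      ∃ F : Γ → ℝ, HarmReal Δ B F ∧
        (ψ : Γ → AddCircle (1 : ℝ)) = fun v => (F v : AddCircle (1 : ℝ))} with hSdef
  -- membership of reduced harmonic functions in the kernel
  have hker : ∀ F : Γ → ℝ, HarmReal Δ B F →
      (fun v => ((F v : ℝ) : AddCircle (1 : ℝ))) ∈ K := by
    intro F hF
    rw [mem_ker_iff]
    intro v hv
    rw [sum_zsmul_coe, hF v hv]
    exact (rmk_apply 0) ▸ map_zero rmk
  -- S contains 0
  have h0S : (0 : K) ∈ S := by
    refine ⟨0, fun v _ => by simp, ?_⟩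
    funext v
    simp [rmk_apply 0 ▸ (map_zero rmk)]
  -- S closed under addition
  have haddS : ∀ {x y : K}, x ∈ S → y ∈ S → x + y ∈ S := by
    rintro x y ⟨F, hF, hFx⟩ ⟨G, hG, hGy⟩
    refine ⟨F + G, ?_, ?_⟩
    · intro v hv
      have := hF v hv
      have := hG v hv
      simp only [Pi.add_apply, mul_add, Finset.sum_add_distrib]
      rw [hF v hv, hG v hv, add_zero]
    · funext v
      have : ((x + y : K) : Γ → AddCircle (1 : ℝ)) v
          = (x : Γ → AddCircle (1 : ℝ)) v + (y : Γ → AddCircle (1 : ℝ)) v := rfl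
      rw [this, hFx, hGy]
      simp only [Pi.add_apply]
      rw [← rmk_apply, ← rmk_apply, ← rmk_apply, ← map_add]
  -- S closed under negation
  have hnegS : ∀ {x : K}, x ∈ S → -x ∈ S := by
    rintro x ⟨F, hF, hFx⟩
    refine ⟨-F, ?_, ?_⟩
    · intro v hv
      simp only [Pi.neg_apply, mul_neg, Finset.sum_neg_distrib]
      rw [hF v hv, neg_zero]
    · funext v
      have : ((-x : K) : Γ → AddCircle (1 : ℝ)) v
          = -((x : Γ → AddCircle (1 : ℝ)) v) := rfl
      rw [this, hFx]
      simp only [Pi.neg_apply]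
      rw [← rmk_apply, ← rmk_apply, ← map_neg]
  -- the bound
  set M : ℝ := ∑ v : Γ, ∑ w : Γ, |((Δ v w : ℝ))| with hMdef
  have hM0 : 0 ≤ M := Finset.sum_nonneg fun v _ =>
    Finset.sum_nonneg fun w _ => abs_nonneg _
  set ε : ℝ := 1 / (M + 1) with hεdef
  have hε0 : 0 < ε := by positivity
  have hrow : ∀ v : Γ, ∑ w : Γ, |((Δ v w : ℝ))| ≤ M :=
    fun v => Finset.single_le_sum
      (fun i _ => Finset.sum_nonneg fun w _ => abs_nonneg ((Δ i w : ℝ)))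
      (Finset.mem_univ v)
  -- small kernel elements are in S
  have hsmall : ∀ ψ : K, (∀ v : Γ, ‖(ψ : Γ → AddCircle (1 : ℝ)) v‖ < ε) → ψ ∈ S := by
    intro ψ hψ
    -- choose small lifts
    have hlift : ∀ v : Γ, ∃ x : ℝ, ((x : AddCircle (1 : ℝ)) = (ψ : Γ → AddCircle (1 : ℝ)) v)
        ∧ |x| < ε := by
      intro v
      obtain ⟨x, hx⟩ := QuotientAddGroup.mk_surjective ((ψ : Γ → AddCircle (1 : ℝ)) v)
      refine ⟨x - round x, ?_, ?_⟩
      · rw [← rmk_apply, map_sub, rmk_apply, rmk_apply, coe_int_zero, sub_zero]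
        exact hx
      · have : ‖((x : ℝ) : AddCircle (1 : ℝ))‖ = |x - round x| := UnitAddCircle.norm_eq
        rw [← this, hx]
        exact hψ v
    choose F hF hFsmall using hlift
    refine ⟨F, ?_, ?_⟩
    · intro v hv
      have hkv := (mem_ker_iff Δ B _).mp ψ.2 v hv
      have : ((∑ w, (Δ v w : ℝ) * F w : ℝ) : AddCircle (1 : ℝ)) = 0 := by
        rw [← sum_zsmul_coe]
        simpa only [hF] using hkv
      obtain ⟨n, hn⟩ := (coe_eq_zero_iff' _).mp this
      have hbound : |∑ w, (Δ v w : ℝ) * F w| < 1 := by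
        calc |∑ w, (Δ v w : ℝ) * F w| ≤ ∑ w, |(Δ v w : ℝ) * F w| :=
              Finset.abs_sum_le_sum_abs _ _
          _ ≤ ∑ w, |(Δ v w : ℝ)| * ε := by
              refine Finset.sum_le_sum fun w _ => ?_
              rw [abs_mul]
              exact mul_le_mul_of_nonneg_left (le_of_lt (hFsmall w)) (abs_nonneg _)
          _ = (∑ w, |(Δ v w : ℝ)|) * ε := by rw [Finset.sum_mul]
          _ ≤ M * ε := mul_le_mul_of_nonneg_right (hrow v) (le_of_lt hε0)
          _ < 1 := by
              rw [hεdef]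
              rw [mul_one_div, div_lt_one (by positivity)]
              linarith
      rw [← hn] at hbound
      obtain ⟨hb1, hb2⟩ := abs_lt.mp hbound
      have h1 : (-1 : ℤ) < n := by exact_mod_cast hb1
      have h2 : n < (1 : ℤ) := by exact_mod_cast hb2
      have hn0 : n = 0 := by omega
      rw [← hn, hn0]; simp
    · funext v
      exact (hF v).symm
  -- the small neighborhood is open
  set U : Set K := {ψ : K | ∀ v : Γ, ‖(ψ : Γ → AddCircle (1 : ℝ)) v‖ < ε} with hUdef
  have hUopen : IsOpen U := by
    have : U = ⋂ v : Γ, {ψ : K | ‖(ψ : Γ → AddCircle (1 : ℝ)) v‖ < ε} := by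
      ext ψ; simp [hUdef]
    rw [this]
    refine isOpen_iInter_of_finite fun v => ?_
    have hc : Continuous fun ψ : K => (ψ : Γ → AddCircle (1 : ℝ)) v :=
      (continuous_apply v).comp continuous_subtype_val
    have : {ψ : K | ‖(ψ : Γ → AddCircle (1 : ℝ)) v‖ < ε}
        = (fun ψ : K => (ψ : Γ → AddCircle (1 : ℝ)) v) ⁻¹' Metric.ball 0 ε := by
      ext ψ; simp [mem_ball_zero_iff]
    rw [this]
    exact hc.isOpen_preimage _ Metric.isOpen_ball
  have hU0 : (0 : K) ∈ U := by
    intro v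
    have : ((0 : K) : Γ → AddCircle (1 : ℝ)) v = 0 := rfl
    rw [this, norm_zero]; exact hε0
  have hUS : U ⊆ S := fun ψ hψ => hsmall ψ hψ
  -- S is open
  have hSopen : IsOpen S := by
    rw [isOpen_iff_mem_nhds]
    intro s hs
    have hc : Continuous fun x : K => x - s := continuous_sub_right s
    have hW : (fun x : K => x - s) ⁻¹' U ∈ nhds s := by
      refine hc.continuousAt.preimage_mem_nhds ?_
      rw [sub_self]
      exact hUopen.mem_nhds hU0
    refine Filter.mem_of_superset hW ?_
    intro x hx
    have := haddS (hUS hx) hs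
    simpa using this
  -- S is closed
  have hSclosed : IsClosed S := by
    rw [← isOpen_compl_iff, isOpen_iff_mem_nhds]
    intro x hx
    have hc : Continuous fun y : K => y - x := continuous_sub_right x
    have hW : (fun y : K => y - x) ⁻¹' U ∈ nhds x := by
      refine hc.continuousAt.preimage_mem_nhds ?_
      rw [sub_self]
      exact hUopen.mem_nhds hU0
    refine Filter.mem_of_superset hW ?_
    intro y hy
    intro hyS
    apply hx
    have := haddS hyS (hnegS (hUS hy))
    simpa using this
  -- forward inclusion: every element of S is connected to 0
  apply Set.eq_of_subset_of_subset
  · intro ψ hψ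
    obtain ⟨F, hF, hFψ⟩ := hψ
    have hmem : ∀ t : ℝ, (fun v => ((t * F v : ℝ) : AddCircle (1 : ℝ))) ∈ K := by
      intro t
      apply hker
      intro v hv
      have : ∑ w, (Δ v w : ℝ) * (t * F w) = t * ∑ w, (Δ v w : ℝ) * F w := by
        rw [Finset.mul_sum]; exact Finset.sum_congr rfl fun w _ => by ring
      rw [this, hF v hv, mul_zero]
    set g : ℝ → K := fun t => ⟨fun v => ((t * F v : ℝ) : AddCircle (1 : ℝ)), hmem t⟩ with hgdef
    have hgcont : Continuous g := by
      refine Continuous.subtype_mk ?_ _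
      refine continuous_pi fun v => ?_
      exact (AddCircle.continuous_mk' (1 : ℝ)).comp (continuous_id.mul continuous_const)
    have hg0 : g 0 = 0 := by
      apply Subtype.ext
      funext v
      show (((0 : ℝ) * F v : ℝ) : AddCircle (1 : ℝ)) = 0
      rw [zero_mul]
      exact (rmk_apply 0) ▸ map_zero rmk
    have hg1 : g 1 = ψ := by
      apply Subtype.ext
      funext v
      show (((1 : ℝ) * F v : ℝ) : AddCircle (1 : ℝ)) = (ψ : Γ → AddCircle (1 : ℝ)) v
      rw [one_mul, hFψ]
    have hconn : IsPreconnected (Set.range g) := by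
      rw [← Set.image_univ]
      exact isPreconnected_univ.image g hgcont.continuousOn
    have h0r : (0 : K) ∈ Set.range g := ⟨0, hg0⟩
    have := hconn.subset_connectedComponent h0r
    exact this ⟨1, hg1⟩
  · exact (IsClopen.connectedComponent_subset ⟨hSclosed, hSopen⟩ h0S)
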